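/- arXiv:1907.07615 — 2 statements merged into one kernel-verified Lean document; each statement's English description precedes it below -/
import Mathlib

section
/- For 0 < β < 1 and every natural number m, ∫_{-1}^1 P_m(x) (1-x)^{-β} dx = 2^{1-β} · (β)_m / (1-β)_{m+1}, where (t)_ℓ is the Pochhammer symbol and P_m is the Legendre polynomial of degree m. -/
open Polynomial intervalIntegral Filter

/-- Legendre polynomial of degree `n` on `[-1,1]`, normalized so `P n 1 = 1`
(Rodrigues' formula). -/
noncomputable def legendrePoly (n : ℕ) : Polynomial ℝ :=
  C ((2 ^ n * n.factorial : ℝ))⁻¹ * derivative^[n] ((X ^ 2 - 1) ^ n)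

/-- Pointwise Legendre polynomial. -/
noncomputable def P (n : ℕ) (x : ℝ) : ℝ := (legendrePoly n).eval x

/-- First derivative of the Legendre polynomial. -/
noncomputable def P' (n : ℕ) (x : ℝ) : ℝ := ((legendrePoly n).derivative).eval x

/-- Second derivative of the Legendre polynomial. -/
noncomputable def P'' (n : ℕ) (x : ℝ) : ℝ := ((legendrePoly n).derivative.derivative).eval x


section AuxLemmas
open Finset

lemma hC2 : (C (2:ℝ) : ℝ[X]) = 2 := map_ofNat C 2

lemma step1 (m : ℕ) : ((X^2 - 1 : ℝ[X])^m).comp (1 - X) =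
    ∑ j ∈ Finset.range (m + 1),
      C ((m.choose j : ℝ) * (-2) ^ (m - j)) * X ^ (m + j) := by
  have h1 : ((X^2 - 1 : ℝ[X])^m).comp (1 - X) = (X^2 + (-(C 2 * X)))^m := by
    rw [pow_comp, sub_comp, pow_comp, one_comp, X_comp, hC2]
    ring
  rw [h1, add_pow]
  refine Finset.sum_congr rfl fun j hj => ?_
  have hj' : j ≤ m := Nat.lt_succ_iff.mp (Finset.mem_range.mp hj)
  have h2 : (-(C 2 * X) : ℝ[X]) ^ (m - j) = C ((-2:ℝ)^(m-j)) * X ^ (m-j) := by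
    rw [show (-(C 2 * X) : ℝ[X]) = C (-2) * X by rw [map_neg, hC2]; ring,
      mul_pow, ← C_pow]
  rw [h2, ← pow_mul]
  have h3 : (X:ℝ[X]) ^ (2*j) * (C ((-2:ℝ) ^ (m - j)) * X ^ (m - j)) * C (m.choose j : ℝ) =
      C ((m.choose j : ℝ) * (-2) ^ (m - j)) * X ^ (2*j + (m-j)) := by
    rw [C_mul, pow_add]; ring
  rw [show ((m.choose j : ℕ) : ℝ[X]) = C ((m.choose j : ℝ)) from (C_eq_natCast _).symm, h3,
    show 2 * j + (m - j) = m + j from by omega]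

lemma coeff_key (m j : ℕ) (hj : j ≤ m) :
    ((2 ^ m * m.factorial : ℝ))⁻¹ * ((-1:ℝ)^m * ((m.choose j : ℝ) * (-2) ^ (m - j)
        * ((m+j).descFactorial m : ℝ)))
      = (-1:ℝ)^j * (m.choose j) * ((m+j).choose j) / 2^j := by
  have hd : ((m+j).descFactorial m : ℝ) = (m.factorial : ℝ) * ((m+j).choose j) := by
    rw [Nat.descFactorial_eq_factorial_mul_choose]
    have : (m+j).choose m = (m+j).choose j := by
      rw [← Nat.choose_symm (Nat.le_add_right m j), Nat.add_sub_cancel_left]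
    rw [this]; push_cast; ring
  obtain ⟨d, rfl⟩ : ∃ d, m = j + d := ⟨m - j, by omega⟩
  have h5 : j + d - j = d := by omega
  rw [hd, h5]
  have h2 : ((-2:ℝ))^d = (-1)^d * 2^d := by rw [neg_pow (2:ℝ)]
  have hf : ((j+d).factorial : ℝ) ≠ 0 := Nat.cast_ne_zero.mpr (Nat.factorial_ne_zero _)
  field_simp
  rw [pow_add, h2, pow_add]
  ring_nf
  rw [show ((-1:ℝ))^(d*2) = 1 from Even.neg_one_pow ⟨d, by ring⟩]
  ring

lemma legendre_comp (m : ℕ) : (legendrePoly m).comp (1 - X) =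
    ∑ j ∈ Finset.range (m + 1),
      C ((-1:ℝ)^j * (m.choose j) * ((m+j).choose j) / 2^j) * X ^ j := by
  have hinv : (derivative^[m] ((X^2-1:ℝ[X])^m)).comp (1 - X)
      = (-1:ℝ[X])^m * derivative^[m] (((X^2-1:ℝ[X])^m).comp (1 - X)) := by
    rw [iterate_derivative_comp_one_sub_X, ← mul_assoc, ← mul_pow]
    norm_num
  rw [legendrePoly, mul_comp, C_comp, hinv, step1, iterate_derivative_sum]
  rw [Finset.mul_sum, Finset.mul_sum]
  refine Finset.sum_congr rfl fun j hj => ?_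
  have hj' : j ≤ m := Nat.lt_succ_iff.mp (Finset.mem_range.mp hj)
  rw [iterate_derivative_C_mul, iterate_derivative_X_pow_eq_natCast_mul,
    show m + j - m = j from by omega]
  rw [show ((-1:ℝ[X])^m) = C ((-1:ℝ)^m) from by rw [map_pow, map_neg, map_one],
    show (((m+j).descFactorial m : ℕ) : ℝ[X]) = C (((m+j).descFactorial m : ℝ)) from
      (C_eq_natCast _).symm.trans (by norm_num)]
  rw [← coeff_key m j hj']
  simp only [← mul_assoc, ← C_mul]

lemma P_eq_sum (m : ℕ) (x : ℝ) :
    P m x = ∑ j ∈ Finset.range (m + 1),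
      (-1:ℝ)^j * (m.choose j) * ((m+j).choose j) / 2^j * (1 - x) ^ j := by
  have h : P m x = ((legendrePoly m).comp (1 - X)).eval (1 - x) := by
    rw [eval_comp]
    simp [P]
  rw [h, legendre_comp, eval_finset_sum]
  simp

lemma integrable_one_sub_rpow {r : ℝ} (hr : -1 < r) :
    IntervalIntegrable (fun x => (1 - x) ^ r) MeasureTheory.volume (-1 : ℝ) 1 := by
  have h := (intervalIntegrable_rpow' (a := 0) (b := 2) hr).comp_sub_left 1
  norm_num at h
  exact h.symm

lemma integral_one_sub_rpow {r : ℝ} (hr : -1 < r) :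
    ∫ x in (-1 : ℝ)..1, (1 - x) ^ r = 2 ^ (r + 1) / (r + 1) := by
  have h := integral_comp_sub_left (a := (-1:ℝ)) (b := 1) (fun u : ℝ => u ^ r) 1
  norm_num at h
  rw [h, integral_rpow (Or.inl hr)]
  rw [Real.zero_rpow (by intro hc; linarith)]
  ring

lemma poch_eval_prod (n : ℕ) (x : ℝ) :
    (ascPochhammer ℝ n).eval x = ∏ j ∈ Finset.range n, (x + j) := by
  induction n with
  | zero => simp
  | succ n ih => rw [ascPochhammer_succ_eval, ih, Finset.prod_range_succ]

lemma prod_erase_eq (m i : ℕ) (hi : i ≤ m) :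
    ∏ j ∈ (Finset.range (m+1)).erase i, ((j:ℝ) - i)
      = (-1:ℝ)^i * i.factorial * (m-i).factorial := by
  have hsplit : (Finset.range (m+1)).erase i
      = Finset.range i ∪ Finset.Ico (i+1) (m+1) := by
    ext j
    simp only [Finset.mem_erase, Finset.mem_range, Finset.mem_union, Finset.mem_Ico]
    omega
  have hdisj : Disjoint (Finset.range i) (Finset.Ico (i+1) (m+1)) := by
    rw [Finset.disjoint_left]
    intro a ha hb
    simp only [Finset.mem_range] at ha
    simp only [Finset.mem_Ico] at hb
    omega
  rw [hsplit, Finset.prod_union hdisj]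
  have h1 : ∏ j ∈ Finset.range i, ((j:ℝ) - i) = (-1:ℝ)^i * i.factorial := by
    have e1 : ∀ j ∈ Finset.range i, ((j:ℝ) - i) = (-1) * (((i - j : ℕ) : ℝ)) := by
      intro j hj
      have hji := Finset.mem_range.mp hj
      rw [Nat.cast_sub hji.le]
      ring
    rw [Finset.prod_congr rfl e1, Finset.prod_mul_distrib, Finset.prod_const,
      Finset.card_range, ← Nat.cast_prod]
    have e2 : ∏ j ∈ Finset.range i, (i - j) = i.factorial := by
      rw [← Finset.prod_range_reflect]
      rw [Finset.prod_congr rfl (fun j hj => show i - (i - 1 - j) = j + 1 by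
        have := Finset.mem_range.mp hj; omega)]
      exact Finset.prod_range_add_one_eq_factorial i
    rw [e2]
  have h2 : ∏ j ∈ Finset.Ico (i+1) (m+1), ((j:ℝ) - i) = (m-i).factorial := by
    rw [Finset.prod_Ico_eq_prod_range]
    have hc : m + 1 - (i + 1) = m - i := by omega
    rw [hc]
    have e3 : ∀ j ∈ Finset.range (m-i), (((i+1+j : ℕ):ℝ) - i) = ((j:ℕ):ℝ) + 1 := by
      intro j hj; push_cast; ring
    rw [Finset.prod_congr rfl e3, ← Finset.prod_range_add_one_eq_factorial (m-i)]
    push_cast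
    rfl
  rw [h1, h2]

lemma nat_ident (m i : ℕ) (hi : i ≤ m) :
    m.choose i * ((m+i).choose i) * i.factorial * (m-i).factorial
      = (i+1).ascFactorial m := by
  apply Nat.eq_of_mul_eq_mul_right (Nat.factorial_pos i)
  have h1 : m.choose i * i.factorial * (m-i).factorial = m.factorial :=
    Nat.choose_mul_factorial_mul_factorial hi
  have h2 : (m+i).choose i * i.factorial * ((m+i)-i).factorial = (m+i).factorial :=
    Nat.choose_mul_factorial_mul_factorial (Nat.le_add_left i m)
  rw [Nat.add_sub_cancel] at h2
  have h3 : i.factorial * (i+1).ascFactorial m = (i + m).factorial :=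
    Nat.factorial_mul_ascFactorial i m
  calc m.choose i * ((m+i).choose i) * i.factorial * (m-i).factorial * i.factorial
      = (m.choose i * i.factorial * (m-i).factorial) * ((m+i).choose i * i.factorial) := by ring
    _ = m.factorial * ((m+i).choose i * i.factorial) := by rw [h1]
    _ = (m+i).choose i * i.factorial * m.factorial := by ring
    _ = (m+i).factorial := h2
    _ = (i+m).factorial := by rw [Nat.add_comm]
    _ = i.factorial * (i+1).ascFactorial m := h3.symm
    _ = (i+1).ascFactorial m * i.factorial := by ring

lemma interp (m : ℕ) :
    ∑ k ∈ Finset.range (m+1), C ((-1:ℝ)^k * (m.choose k) * ((m+k).choose k)) *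
        ∏ j ∈ (Finset.range (m+1)).erase k, (C ((j:ℝ)+1) - X)
      = ascPochhammer ℝ m := by
  rw [← sub_eq_zero]
  apply Polynomial.eq_zero_of_natDegree_lt_card_of_eval_eq_zero' _
    ((Finset.range (m+1)).image (fun i : ℕ => (i:ℝ)+1))
  · intro y hy
    obtain ⟨i, hi, rfl⟩ := Finset.mem_image.mp hy
    have him : i ≤ m := Nat.lt_succ_iff.mp (Finset.mem_range.mp hi)
    rw [eval_sub, sub_eq_zero, eval_finset_sum]
    have hterm : ∀ k ∈ Finset.range (m+1), k ≠ i →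
        eval ((i:ℝ)+1) (C ((-1:ℝ)^k * (m.choose k) * ((m+k).choose k)) *
          ∏ j ∈ (Finset.range (m+1)).erase k, (C ((j:ℝ)+1) - X)) = 0 := by
      intro k hk hki
      rw [eval_mul, eval_prod]
      have : ∏ j ∈ (Finset.range (m+1)).erase k, eval ((i:ℝ)+1) (C ((j:ℝ)+1) - X) = 0 := by
        apply Finset.prod_eq_zero (i := i) (Finset.mem_erase.mpr ⟨fun h => hki h.symm, hi⟩)
        simp
      rw [this, mul_zero]
    rw [Finset.sum_eq_single_of_mem i hi (fun k hk hki => hterm k hk hki)]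
    rw [eval_mul, eval_prod, eval_C]
    have hpe : ∀ j ∈ (Finset.range (m+1)).erase i,
        eval ((i:ℝ)+1) (C ((j:ℝ)+1) - X) = (j:ℝ) - i := by
      intro j hj; simp
    rw [Finset.prod_congr rfl hpe, prod_erase_eq m i him]
    have hrhs : (ascPochhammer ℝ m).eval ((i:ℝ)+1) = ((i+1).ascFactorial m : ℝ) := by
      have := ascPochhammer_eval_cast (S := ℝ) m (i+1)
      rw [ascPochhammer_nat_eq_ascFactorial] at this
      have h' : ((i:ℝ)+1) = ((i+1:ℕ):ℝ) := by push_cast; ring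
      rw [h', ← this]
    rw [hrhs, ← nat_ident m i him]
    push_cast
    ring_nf
    rw [show ((-1:ℝ))^(i*2) = 1 from Even.neg_one_pow ⟨i, by ring⟩]
    ring
  · have hcard : #((Finset.range (m+1)).image (fun i : ℕ => (i:ℝ)+1)) = m + 1 := by
      rw [Finset.card_image_of_injective _ (fun a b hab => by
        have : (a:ℝ) = b := by linarith [hab]
        exact_mod_cast this), Finset.card_range]
    rw [hcard]
    have hA : (∑ k ∈ Finset.range (m+1), C ((-1:ℝ)^k * (m.choose k) * ((m+k).choose k)) *
        ∏ j ∈ (Finset.range (m+1)).erase k, (C ((j:ℝ)+1) - X)).natDegree ≤ m := by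
      apply Polynomial.natDegree_sum_le_of_forall_le
      intro k hk
      refine le_trans (Polynomial.natDegree_mul_le) ?_
      rw [Polynomial.natDegree_C]
      simp only [zero_add]
      refine le_trans (Polynomial.natDegree_prod_le _ _) ?_
      refine le_trans (Finset.sum_le_card_nsmul _ _ 1 (fun j hj => ?_)) ?_
      · refine le_trans (Polynomial.natDegree_sub_le _ _) (max_le ((Polynomial.natDegree_C _).le.trans zero_le_one) (le_of_eq Polynomial.natDegree_X))
      · rw [Finset.card_erase_of_mem hk, Finset.card_range]
        simp
    have hB : (ascPochhammer ℝ m).natDegree = m := ascPochhammer_natDegree (S := ℝ) m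
    calc (_ - ascPochhammer ℝ m).natDegree ≤ max _ (ascPochhammer ℝ m).natDegree :=
          Polynomial.natDegree_sub_le _ _
      _ ≤ m := by rw [hB]; exact max_le hA (le_refl m)
      _ < m + 1 := Nat.lt_succ_self m

lemma key_identity (β : ℝ) (hβ1 : β < 1) (m : ℕ) :
    ∑ k ∈ Finset.range (m+1),
        (-1:ℝ)^k * (m.choose k) * ((m+k).choose k) / ((k:ℝ) + 1 - β)
      = (ascPochhammer ℝ m).eval β / (ascPochhammer ℝ (m + 1)).eval (1 - β) := by
  have hne : ∀ j ∈ Finset.range (m+1), ((j:ℝ) + 1 - β) ≠ 0 := by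
    intro j hj
    have : (0:ℝ) ≤ j := Nat.cast_nonneg j
    intro hc; linarith
  have hden : (ascPochhammer ℝ (m+1)).eval (1 - β)
      = ∏ j ∈ Finset.range (m+1), ((j:ℝ) + 1 - β) := by
    rw [poch_eval_prod]
    exact Finset.prod_congr rfl (fun j hj => by ring)
  have hprod_ne : ∏ j ∈ Finset.range (m+1), ((j:ℝ) + 1 - β) ≠ 0 :=
    Finset.prod_ne_zero_iff.mpr hne
  have hnum : ∑ k ∈ Finset.range (m+1), ((-1:ℝ)^k * (m.choose k) * ((m+k).choose k)) *
      ∏ j ∈ (Finset.range (m+1)).erase k, ((j:ℝ) + 1 - β)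
        = (ascPochhammer ℝ m).eval β := by
    have := congrArg (eval β) (interp m)
    rw [eval_finset_sum] at this
    rw [← this]
    refine Finset.sum_congr rfl fun k hk => ?_
    rw [eval_mul, eval_C, eval_prod]
    congr 1
    exact (Finset.prod_congr rfl (fun j hj => by simp)).symm
  rw [hden, eq_div_iff hprod_ne, Finset.sum_mul, ← hnum]
  refine Finset.sum_congr rfl fun k hk => ?_
  rw [← Finset.mul_prod_erase _ _ hk, div_mul_eq_mul_div, mul_comm ((k:ℝ)+1-β)]
  rw [mul_div_assoc, mul_div_assoc, div_self (hne k hk), mul_one]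

end AuxLemmas

theorem integral_legendre_right_weight (β : ℝ) (hβ0 : 0 < β) (hβ1 : β < 1) (m : ℕ) :
    ∫ x in (-1 : ℝ)..1, P m x * (1 - x) ^ (-β)
      = 2 ^ (1 - β) * (ascPochhammer ℝ m).eval β
          / (ascPochhammer ℝ (m + 1)).eval (1 - β) := by
  have hEq : Set.EqOn (fun x => P m x * (1-x)^(-β))
      (fun x => ∑ j ∈ Finset.range (m+1),
        ((-1:ℝ)^j * (m.choose j) * ((m+j).choose j) / 2^j) * (1-x)^((j:ℝ)-β))
      (Set.uIcc (-1:ℝ) 1) := by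
    intro x hx
    have hx1 : (0:ℝ) ≤ 1 - x := by
      rw [Set.uIcc_of_le (by norm_num : (-1:ℝ) ≤ 1)] at hx
      have := hx.2
      linarith
    simp only
    rw [P_eq_sum, Finset.sum_mul]
    refine Finset.sum_congr rfl fun j hj => ?_
    have hne : (j:ℝ) + (-β) ≠ 0 := by
      rcases Nat.eq_zero_or_pos j with h | h
      · simp [h]; linarith
      · have h1 : (1:ℝ) ≤ (j:ℝ) := by exact_mod_cast h
        intro hc; linarith
    rw [mul_assoc, ← Real.rpow_natCast (1-x) j, ← Real.rpow_add' hx1 hne]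
    rw [show (j:ℝ) + (-β) = (j:ℝ) - β by ring]
  rw [intervalIntegral.integral_congr hEq]
  have hrexp : ∀ j : ℕ, (-1:ℝ) < (j:ℝ) - β := by
    intro j
    have : (0:ℝ) ≤ j := Nat.cast_nonneg j
    linarith
  rw [intervalIntegral.integral_finset_sum (fun j hj =>
    ((integrable_one_sub_rpow (hrexp j)).const_mul _))]
  have hval : ∀ j ∈ Finset.range (m+1),
      (∫ x in (-1:ℝ)..1, ((-1:ℝ)^j * (m.choose j) * ((m+j).choose j) / 2^j)
          * (1-x)^((j:ℝ)-β))
        = 2^(1-β) * ((-1:ℝ)^j * (m.choose j) * ((m+j).choose j) / ((j:ℝ)+1-β)) := by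
    intro j hj
    rw [intervalIntegral.integral_const_mul, integral_one_sub_rpow (hrexp j)]
    rw [show (j:ℝ) - β + 1 = (j:ℝ) + (1-β) by ring, Real.rpow_add two_pos,
      Real.rpow_natCast]
    have h2j : ((2:ℝ)^j) ≠ 0 := by positivity
    have hD : ((j:ℝ) + (1-β)) ≠ 0 := by
      have : (0:ℝ) ≤ j := Nat.cast_nonneg j
      intro hc; linarith
    rw [show ((j:ℝ) + 1 - β) = (j:ℝ) + (1-β) by ring, div_mul_div_comm,
      ← mul_div_assoc, div_eq_div_iff (mul_ne_zero h2j hD) hD]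
    ring
  rw [Finset.sum_congr rfl hval, ← Finset.mul_sum, key_identity β hβ1 m, mul_div_assoc]
end

section
/- Let 0 < γ < 1 and define q_m = ∫_{-1}^1 P_m(x)(1-x^2)^{-γ} dx, where P_m is the Legendre polynomial of degree m. Then q_m = 0 whenever m is odd, q_0 = 2^{1-2γ} Γ(1-γ)^2 / Γ(2-2γ), and for even m, q_{m+2} = ((m+2γ)(m+1))/((m+3-2γ)(m+2)) · q_m. -/
/-!
Integrating Legendre's equation `(1 - x²) P'' = 2 x P' - n (n + 1) P` against the weight
`w = (1 - x²)^(-γ)` and integrating by parts once (the boundary term carries the factor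
`(1 - x²)^(1 - γ)`, which vanishes at `±1` since `γ < 1`) gives
`n (n + 1) q_n = 2 γ ∫ x P_n' w`. Together with the identities `P_{n+1}' = x P_n' + (n + 1) P_n` and
`x P_{n+2}' = (n + 2) P_{n+2} + P_{n+1}'`, read off from Rodrigues' formula, this yields the
two-step recurrence for every `m`. The same integration by parts applied to `1` gives
`q_1 = ∫ x w = 0`, so the recurrence also kills all odd moments. The substitution `x = 2 t - 1`
turns `q_0` into `2^(1 - 2γ) B(1 - γ, 1 - γ)`.
-/

open Polynomial intervalIntegral Filter

namespace Polynomial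

variable {R : Type*} [CommRing R]

theorem derivative_X_sq_sub_one_pow_succ (n : ℕ) :
    derivative ((X ^ 2 - 1 : R[X]) ^ (n + 1))
      = ((2 * (n + 1) : ℕ) : R[X]) * (X * (X ^ 2 - 1) ^ n) := by
  rw [derivative_pow]
  simp only [derivative_sub, derivative_X_pow, derivative_one, map_natCast]
  push_cast
  ring

theorem iterate_derivative_X_mul (k : ℕ) (p : R[X]) :
    derivative^[k + 1] (X * p)
      = X * derivative^[k + 1] p + ((k + 1 : ℕ) : R[X]) * derivative^[k] p := by
  rw [mul_comm, iterate_derivative_mul_X, add_tsub_cancel_right, nsmul_eq_mul, mul_comm]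

theorem iterate_derivative_X_sq_sub_one_mul (k : ℕ) (p : R[X]) :
    derivative^[k + 2] ((X ^ 2 - 1) * p) = (X ^ 2 - 1 : R[X]) * derivative^[k + 2] p
      + 2 * ((k : R[X]) + 2) * X * derivative^[k + 1] p
      + ((k : R[X]) + 2) * ((k : R[X]) + 1) * derivative^[k] p := by
  rw [show k + 2 = k + 1 + 1 from rfl, sub_mul, one_mul, iterate_derivative_sub, sq, mul_assoc]
  simp only [iterate_derivative_X_mul]
  push_cast
  ring

/-- Expand `D^(n+2) (X^2 - 1)^(n+1)` once as `D^(n+2) ((X^2 - 1) (X^2 - 1)^n)` and once as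
`D^(n+1)` of its first derivative. -/
theorem X_sq_sub_one_mul_iterate_derivative_X_sq_sub_one_pow (n : ℕ) :
    (X ^ 2 - 1 : R[X]) * derivative^[n + 2] ((X ^ 2 - 1) ^ n)
      + 2 * X * derivative^[n + 1] ((X ^ 2 - 1) ^ n)
      = (n : R[X]) * ((n : R[X]) + 1) * derivative^[n] ((X ^ 2 - 1) ^ n) := by
  have h := iterate_derivative_X_sq_sub_one_mul n ((X ^ 2 - 1 : R[X]) ^ n)
  rw [← pow_succ', Function.iterate_succ_apply, derivative_X_sq_sub_one_pow_succ,
    iterate_derivative_natCast_mul, iterate_derivative_X_mul] at h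
  push_cast at h
  linear_combination -h

theorem isRoot_iterate_derivative_X_sq_sub_one_pow {k n : ℕ} (h : k < n) :
    (derivative^[k] ((X ^ 2 - 1 : R[X]) ^ n)).IsRoot 1 := by
  have hdvd : (X - C 1 : R[X]) ^ n ∣ (X ^ 2 - 1) ^ n :=
    pow_dvd_pow_of_dvd ⟨X + 1, by rw [C_1]; ring⟩ n
  rw [← dvd_iff_isRoot]
  exact (dvd_pow_self _ (Nat.sub_ne_zero_of_lt h)).trans
    (pow_sub_dvd_iterate_derivative_of_pow_dvd k hdvd)

theorem eq_zero_of_derivative_eq_zero_of_isRoot {R : Type*} [Semiring R] [IsAddTorsionFree R]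
    {p : R[X]} {a : R} (hd : derivative p = 0) (hr : p.IsRoot a) : p = 0 := by
  rw [eq_C_of_derivative_eq_zero hd] at hr ⊢
  simpa using hr

end Polynomial

theorem legendrePoly_zero : legendrePoly 0 = 1 := by
  simp [legendrePoly]

theorem legendrePoly_one : legendrePoly 1 = X := by
  simp [legendrePoly, one_add_one_eq_two, ← mul_assoc, ← C_mul]

theorem legendrePoly_succ (n : ℕ) :
    legendrePoly (n + 1)
      = C (2 ^ n * n.factorial : ℝ)⁻¹ * derivative^[n] (X * (X ^ 2 - 1) ^ n) := by
  rw [legendrePoly, Function.iterate_succ_apply, derivative_X_sq_sub_one_pow_succ,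
    iterate_derivative_natCast_mul, ← mul_assoc, ← map_natCast C, ← C_mul]
  congr 2
  rw [Nat.factorial_succ]
  push_cast
  field_simp
  ring

theorem derivative_legendrePoly_succ (n : ℕ) :
    derivative (legendrePoly (n + 1))
      = X * derivative (legendrePoly n) + C ((n : ℝ) + 1) * legendrePoly n := by
  rw [legendrePoly_succ, derivative_C_mul, ← Function.iterate_succ_apply' derivative,
    iterate_derivative_X_mul, legendrePoly, derivative_C_mul,
    ← Function.iterate_succ_apply' derivative]
  simp only [map_add, map_natCast, map_one, Nat.cast_add, Nat.cast_one]
  ring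

theorem one_sub_X_sq_mul_derivative_derivative_legendrePoly (n : ℕ) :
    (1 - X ^ 2) * derivative (derivative (legendrePoly n))
      = C 2 * (X * derivative (legendrePoly n)) - C ((n : ℝ) * (n + 1)) * legendrePoly n := by
  have h := X_sq_sub_one_mul_iterate_derivative_X_sq_sub_one_pow (R := ℝ) n
  simp only [legendrePoly, derivative_C_mul, ← Function.iterate_succ_apply' derivative]
  simp only [map_mul, map_add, map_natCast, map_one, map_ofNat]
  linear_combination (-C (2 ^ n * n.factorial : ℝ)⁻¹) * h

theorem isRoot_legendrePoly_add_two_sub_X_mul (n : ℕ) :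
    (legendrePoly (n + 2) - X * legendrePoly (n + 1)).IsRoot 1 := by
  have h := isRoot_iterate_derivative_X_sq_sub_one_pow (R := ℝ) (Nat.lt_succ_self n)
  rw [legendrePoly_succ (n + 1), iterate_derivative_X_mul, legendrePoly]
  simp_all [IsRoot]

/-- Both sides have the same derivative, by Legendre's equation and
`derivative_legendrePoly_succ`, and both vanish at `1`. -/
theorem X_sq_sub_one_mul_derivative_legendrePoly_succ (n : ℕ) :
    (X ^ 2 - 1) * derivative (legendrePoly (n + 1))
      = C ((n : ℝ) + 2) * (legendrePoly (n + 2) - X * legendrePoly (n + 1)) := by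
  rw [← sub_eq_zero]
  apply eq_zero_of_derivative_eq_zero_of_isRoot (a := 1)
  · have hode := one_sub_X_sq_mul_derivative_derivative_legendrePoly (n + 1)
    have hB := derivative_legendrePoly_succ (n + 1)
    simp only [derivative_sub, derivative_mul, derivative_C, derivative_X_pow, derivative_X,
      derivative_one]
    rw [hB]
    simp only [map_mul, map_add, map_natCast, map_one, map_ofNat, Nat.cast_add, Nat.cast_one]
      at hode ⊢
    linear_combination -hode
  · have h := isRoot_legendrePoly_add_two_sub_X_mul n
    simp_all [IsRoot]

theorem X_mul_derivative_legendrePoly_add_two (n : ℕ) :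
    X * derivative (legendrePoly (n + 2))
      = C ((n : ℝ) + 2) * legendrePoly (n + 2) + derivative (legendrePoly (n + 1)) := by
  have h := X_sq_sub_one_mul_derivative_legendrePoly_succ n
  rw [derivative_legendrePoly_succ (n + 1), Nat.cast_succ, add_assoc, one_add_one_eq_two]
  linear_combination h

open MeasureTheory Set

theorem intervalIntegrable_one_sub_sq_rpow {r : ℝ} (hr : -1 < r) :
    IntervalIntegrable (fun x : ℝ => (1 - x ^ 2) ^ r) volume (-1) 1 := by
  have hright : IntervalIntegrable (fun x : ℝ => (1 - x ^ 2) ^ r) volume 0 1 := by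
    have hsing : IntervalIntegrable (fun x : ℝ => (1 - x) ^ r) volume 0 1 := by
      simpa using (intervalIntegral.intervalIntegrable_rpow' (a := 1) (b := 0) hr).comp_sub_left 1
    have hcont : ContinuousOn (fun x : ℝ => (1 + x) ^ r) (uIcc 0 1) := by
      refine ContinuousOn.rpow_const (by fun_prop) fun x hx => Or.inl ?_
      rw [uIcc_of_le zero_le_one] at hx
      linarith [hx.1]
    refine (hsing.continuousOn_mul hcont).congr_uIoo fun x hx => ?_
    rw [uIoo_of_le zero_le_one] at hx
    change (1 + x) ^ r * (1 - x) ^ r = _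
    rw [← Real.mul_rpow (by linarith [hx.1]) (by linarith [hx.2])]
    ring_nf
  have hleft : IntervalIntegrable (fun x : ℝ => (1 - x ^ 2) ^ r) volume (-1) 0 := by
    simpa using ((IntervalIntegrable.iff_comp_neg (by simp)).mp hright).symm
  exact hleft.trans hright

noncomputable def weightedIntegral (γ : ℝ) (p : ℝ[X]) : ℝ :=
  ∫ x in (-1 : ℝ)..1, p.eval x * (1 - x ^ 2) ^ (-γ)

section WeightedIntegral

variable {γ : ℝ}

theorem intervalIntegrable_eval_mul_one_sub_sq_rpow (hγ : γ < 1) (p : ℝ[X]) :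
    IntervalIntegrable (fun x : ℝ => p.eval x * (1 - x ^ 2) ^ (-γ)) volume (-1) 1 :=
  (intervalIntegrable_one_sub_sq_rpow (by linarith)).continuousOn_mul p.continuous.continuousOn

theorem weightedIntegral_add (hγ : γ < 1) (p q : ℝ[X]) :
    weightedIntegral γ (p + q) = weightedIntegral γ p + weightedIntegral γ q := by
  simp only [weightedIntegral, eval_add, add_mul]
  exact intervalIntegral.integral_add (intervalIntegrable_eval_mul_one_sub_sq_rpow hγ p)
    (intervalIntegrable_eval_mul_one_sub_sq_rpow hγ q)

theorem weightedIntegral_sub (hγ : γ < 1) (p q : ℝ[X]) :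
    weightedIntegral γ (p - q) = weightedIntegral γ p - weightedIntegral γ q := by
  simp only [weightedIntegral, eval_sub, sub_mul]
  exact intervalIntegral.integral_sub (intervalIntegrable_eval_mul_one_sub_sq_rpow hγ p)
    (intervalIntegrable_eval_mul_one_sub_sq_rpow hγ q)

theorem weightedIntegral_C_mul (c : ℝ) (p : ℝ[X]) :
    weightedIntegral γ (C c * p) = c * weightedIntegral γ p := by
  simp only [weightedIntegral, eval_mul, eval_C, mul_assoc, intervalIntegral.integral_const_mul]

theorem weightedIntegral_one_sub_X_sq_mul_derivative (hγ : γ < 1) (g : ℝ[X]) :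
    weightedIntegral γ ((1 - X ^ 2) * derivative g)
      = 2 * (1 - γ) * weightedIntegral γ (X * g) := by
  set F : ℝ → ℝ := fun x => g.eval x * (1 - x ^ 2) ^ (1 - γ)
  have hF : ContinuousOn F (Icc (-1) 1) :=
    g.continuous.continuousOn.mul
      (ContinuousOn.rpow_const (by fun_prop) fun _ _ => Or.inr (by linarith))
  have hF' : ∀ x ∈ Ioo (-1 : ℝ) 1, HasDerivAt F
      (((1 - X ^ 2) * derivative g - C (2 * (1 - γ)) * (X * g)).eval x
        * (1 - x ^ 2) ^ (-γ)) x := by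
    intro x hx
    have hpos : 0 < 1 - x ^ 2 := by nlinarith [hx.1, hx.2]
    have hw := (((hasDerivAt_pow 2 x).const_sub 1).rpow_const (p := 1 - γ) (Or.inl hpos.ne'))
    refine ((g.hasDerivAt x).mul hw).congr_deriv ?_
    rw [show 1 - γ - 1 = -γ by ring, show (1 : ℝ) - γ = 1 + -γ by ring,
      Real.rpow_add hpos, Real.rpow_one]
    simp only [eval_sub, eval_mul, eval_one, eval_pow, eval_X, eval_C]
    push_cast
    ring
  have hFTC := intervalIntegral.integral_eq_sub_of_hasDerivAt_of_le (by norm_num) hF hF'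
    (intervalIntegrable_eval_mul_one_sub_sq_rpow hγ _)
  have hzero : (0 : ℝ) ^ (1 - γ) = 0 := Real.zero_rpow (by linarith)
  simp only [F, show (1 : ℝ) - 1 ^ 2 = 0 by norm_num, show (1 : ℝ) - (-1) ^ 2 = 0 by norm_num,
    hzero, mul_zero, sub_zero] at hFTC
  rw [← weightedIntegral, weightedIntegral_sub hγ, weightedIntegral_C_mul] at hFTC
  linarith

end WeightedIntegral

theorem integral_rpow_mul_one_sub_rpow {a b : ℝ} (ha : 0 < a) (hb : 0 < b) :
    ∫ x in (0 : ℝ)..1, x ^ (a - 1) * (1 - x) ^ (b - 1)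
      = Real.Gamma a * Real.Gamma b / Real.Gamma (a + b) := by
  have hbeta : Complex.betaIntegral a b
      = ↑(∫ x in (0 : ℝ)..1, x ^ (a - 1) * (1 - x) ^ (b - 1)) := by
    rw [Complex.betaIntegral, ← intervalIntegral.integral_ofReal]
    refine intervalIntegral.integral_congr fun x hx => ?_
    rw [uIcc_of_le zero_le_one] at hx
    simp only [Complex.ofReal_mul, Complex.ofReal_cpow hx.1,
      Complex.ofReal_cpow (sub_nonneg.2 hx.2)]
    push_cast
    rfl
  have h := Complex.Gamma_mul_Gamma_eq_betaIntegral (s := a) (t := b) (by simpa) (by simpa)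
  rw [hbeta, ← Complex.ofReal_add, Complex.Gamma_ofReal, Complex.Gamma_ofReal,
    Complex.Gamma_ofReal] at h
  rw [eq_div_iff (Real.Gamma_pos_of_pos (add_pos ha hb)).ne', mul_comm]
  exact_mod_cast h.symm

theorem integral_one_sub_sq_rpow {γ : ℝ} (hγ : γ < 1) :
    ∫ x in (-1 : ℝ)..1, (1 - x ^ 2) ^ (-γ)
      = 2 ^ (1 - 2 * γ) * Real.Gamma (1 - γ) ^ 2 / Real.Gamma (2 - 2 * γ) := by
  have hsubst := intervalIntegral.integral_comp_mul_add (a := 0) (b := 1)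
    (fun x : ℝ => (1 - x ^ 2) ^ (-γ)) two_ne_zero (-1)
  have hfactor : ∀ t ∈ uIcc (0 : ℝ) 1,
      (1 - (2 * t + -1) ^ 2) ^ (-γ)
        = 2 ^ (-2 * γ) * (t ^ (1 - γ - 1) * (1 - t) ^ (1 - γ - 1)) := by
    intro t ht
    rw [uIcc_of_le zero_le_one] at ht
    rw [show 1 - (2 * t + -1) ^ 2 = 2 ^ (2 : ℝ) * (t * (1 - t)) by norm_num; ring,
      Real.mul_rpow (by positivity) (mul_nonneg ht.1 (sub_nonneg.2 ht.2)),
      Real.mul_rpow ht.1 (sub_nonneg.2 ht.2), ← Real.rpow_mul zero_le_two]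
    ring_nf
  rw [intervalIntegral.integral_congr hfactor, intervalIntegral.integral_const_mul,
    integral_rpow_mul_one_sub_rpow (by linarith) (by linarith)] at hsubst
  norm_num at hsubst
  rw [show 1 - γ + (1 - γ) = 2 - 2 * γ by ring] at hsubst
  rw [show 1 - 2 * γ = 1 + -(2 * γ) by ring, Real.rpow_add two_pos, Real.rpow_one]
  linear_combination -2 * hsubst

section Recurrence

variable {γ : ℝ}

theorem weightedIntegral_X (hγ : γ < 1) : weightedIntegral γ X = 0 := by
  have h := weightedIntegral_one_sub_X_sq_mul_derivative hγ 1
  simp only [derivative_one, mul_zero, mul_one] at h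
  have h0 : weightedIntegral γ 0 = 0 := by simp [weightedIntegral]
  exact (mul_eq_zero.1 (h0 ▸ h).symm).resolve_left (mul_ne_zero two_ne_zero (by linarith))

theorem mul_weightedIntegral_legendrePoly (hγ : γ < 1) (n : ℕ) :
    n * (n + 1) * weightedIntegral γ (legendrePoly n)
      = 2 * γ * weightedIntegral γ (X * derivative (legendrePoly n)) := by
  have h := congrArg (weightedIntegral γ) (one_sub_X_sq_mul_derivative_derivative_legendrePoly n)
  rw [weightedIntegral_one_sub_X_sq_mul_derivative hγ, weightedIntegral_sub hγ,
    weightedIntegral_C_mul, weightedIntegral_C_mul] at h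
  linear_combination h

theorem weightedIntegral_legendrePoly_add_two (hγ : γ < 1) (m : ℕ) :
    (m + 2) * (m + 3 - 2 * γ) * weightedIntegral γ (legendrePoly (m + 2))
      = (m + 1) * (m + 2 * γ) * weightedIntegral γ (legendrePoly m) := by
  have hm := mul_weightedIntegral_legendrePoly hγ m
  have hm₂ := mul_weightedIntegral_legendrePoly hγ (m + 2)
  have hB := congrArg (weightedIntegral γ) (derivative_legendrePoly_succ m)
  have hC := congrArg (weightedIntegral γ) (X_mul_derivative_legendrePoly_add_two m)
  rw [weightedIntegral_add hγ, weightedIntegral_C_mul] at hB hC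
  push_cast at hm₂
  linear_combination hm₂ + 2 * γ * hC + 2 * γ * hB - hm

end Recurrence

theorem integral_legendre_symmetric_weight_general (γ : ℝ) (hγ1 : γ < 1)
    (q : ℕ → ℝ) (hq : ∀ m, q m = ∫ x in (-1 : ℝ)..1, P m x * (1 - x ^ 2) ^ (-γ)) :
    (∀ m : ℕ, Odd m → q m = 0) ∧
    q 0 = 2 ^ (1 - 2 * γ) * Real.Gamma (1 - γ) ^ 2 / Real.Gamma (2 - 2 * γ) ∧
    ∀ m : ℕ, Even m →
      q (m + 2) = ((m + 2 * γ) * (m + 1)) / ((m + 3 - 2 * γ) * (m + 2)) * q m := by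
  have hq' : ∀ m, q m = weightedIntegral γ (legendrePoly m) := hq
  have hrec : ∀ m : ℕ,
      q (m + 2) = ((m + 2 * γ) * (m + 1)) / ((m + 3 - 2 * γ) * (m + 2)) * q m := by
    intro m
    have hden : ((m : ℝ) + 3 - 2 * γ) * (m + 2) ≠ 0 :=
      mul_ne_zero (by linarith [m.cast_nonneg (α := ℝ)]) (by positivity)
    rw [hq', hq', div_mul_eq_mul_div, eq_div_iff hden]
    linear_combination weightedIntegral_legendrePoly_add_two hγ1 m
  refine ⟨?_, ?_, fun m _ => hrec m⟩
  · rintro _ ⟨k, rfl⟩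
    induction k with
    | zero => rw [Nat.mul_zero, Nat.zero_add, hq', legendrePoly_one, weightedIntegral_X hγ1]
    | succ k ih => rw [show 2 * (k + 1) + 1 = 2 * k + 1 + 2 by ring, hrec, ih, mul_zero]
  · rw [hq', legendrePoly_zero, ← integral_one_sub_sq_rpow hγ1]
    simp [weightedIntegral]

theorem integral_legendre_symmetric_weight (γ : ℝ) (hγ0 : 0 < γ) (hγ1 : γ < 1)
    (q : ℕ → ℝ) (hq : ∀ m, q m = ∫ x in (-1 : ℝ)..1, P m x * (1 - x ^ 2) ^ (-γ)) :
    (∀ m : ℕ, Odd m → q m = 0) ∧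
    q 0 = 2 ^ (1 - 2 * γ) * Real.Gamma (1 - γ) ^ 2 / Real.Gamma (2 - 2 * γ) ∧
    ∀ m : ℕ, Even m →
      q (m + 2) = ((m + 2 * γ) * (m + 1)) / ((m + 3 - 2 * γ) * (m + 2)) * q m :=
  integral_legendre_symmetric_weight_general γ hγ1 q hq
end
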